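/- Let (𝒳, Σ) be a measurable space with a probability measure μ, let E ⊆ 𝒳 be a measurable set, let y : 𝒳 → ℝ be measurable and integrable with respect to μ, and let (y_n)_{n ∈ ℕ} be a sequence of measurable functions 𝒳 → ℝ, each integrable with respect to μ. Suppose there exist constants C̃, Ĉ with 0 ≤ C̃ < 1, 0 ≤ Ĉ < 1, and K ≥ 1 such that for every n: |∫_{𝒳∖E} (y − y_n) dμ| ≤ C̃ · |∫_E (y − y_n) dμ|, ∫_{𝒳∖E} |y − y_n| dμ ≤ Ĉ · ∫_E |y − y_n| dμ, and ∫_E |y_n − y| dμ ≤ K · |∫_E (y_n − y) dμ|. If W₁(y_n♯μ, y♯μ) → 0 as n → ∞, then y_n converges to y in probability with respect to μ; that is, for every t > 0, μ({x ∈ 𝒳 : |y_n(x) − y(x)| ≥ t}) → 0 as n → ∞. -/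

import Mathlib

open MeasureTheory
open scoped ENNReal

/-- A coupling of two probability measures on `ℝ` is a measure on `ℝ × ℝ`
whose first marginal is `ν₁` and whose second marginal is `ν₂`. -/
def IsCoupling (γ : Measure (ℝ × ℝ)) (ν₁ ν₂ : Measure ℝ) : Prop :=
  γ.map Prod.fst = ν₁ ∧ γ.map Prod.snd = ν₂

/-- The 1-Wasserstein distance between two measures on `ℝ`:
the infimum over all couplings `γ` of `∫ |a - b| dγ(a, b)`. -/
noncomputable def W1 (ν₁ ν₂ : Measure ℝ) : ℝ≥0∞ :=
  ⨅ (γ : Measure (ℝ × ℝ)) (_ : IsCoupling γ ν₁ ν₂), ∫⁻ q, edist q.1 q.2 ∂γ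

open Filter

/-!
Every coupling of `Yₙ♯μ` and `y♯μ` has transport cost at least `|∫ (Yₙ - y) dμ|`, so the
mean error is bounded by `W₁`. Splitting `𝒳` into `E` and `Eᶜ`, the three consistency
conditions bound the `L¹` error by `(1 + Ĉ) K / (1 - C̃)` times the mean error, so
`Yₙ → y` in `L¹`, hence in probability by Markov's inequality.
-/

open Topology

namespace IsCoupling

variable {γ : Measure (ℝ × ℝ)} {ν₁ ν₂ : Measure ℝ}

lemma integrable_fst (hγ : IsCoupling γ ν₁ ν₂) (h₁ : Integrable id ν₁) :
    Integrable Prod.fst γ := by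
  rw [← hγ.1] at h₁
  exact (integrable_map_measure aestronglyMeasurable_id measurable_fst.aemeasurable).mp h₁

lemma integrable_snd (hγ : IsCoupling γ ν₁ ν₂) (h₂ : Integrable id ν₂) :
    Integrable Prod.snd γ := by
  rw [← hγ.2] at h₂
  exact (integrable_map_measure aestronglyMeasurable_id measurable_snd.aemeasurable).mp h₂

lemma integral_fst (hγ : IsCoupling γ ν₁ ν₂) : ∫ q, q.1 ∂γ = ∫ a, a ∂ν₁ := by
  rw [← hγ.1, integral_map measurable_fst.aemeasurable measurable_id'.aestronglyMeasurable]

lemma integral_snd (hγ : IsCoupling γ ν₁ ν₂) : ∫ q, q.2 ∂γ = ∫ a, a ∂ν₂ := by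
  rw [← hγ.2, integral_map measurable_snd.aemeasurable measurable_id'.aestronglyMeasurable]

lemma abs_integral_id_sub_le (hγ : IsCoupling γ ν₁ ν₂) (h₁ : Integrable id ν₁)
    (h₂ : Integrable id ν₂) :
    |∫ a, a ∂ν₁ - ∫ a, a ∂ν₂| ≤ ∫ q, |q.1 - q.2| ∂γ := by
  rw [← hγ.integral_fst, ← hγ.integral_snd,
    ← integral_sub (hγ.integrable_fst h₁) (hγ.integrable_snd h₂)]
  exact abs_integral_le_integral_abs

end IsCoupling

lemma ofReal_abs_integral_id_sub_le_W1 {ν₁ ν₂ : Measure ℝ} (h₁ : Integrable id ν₁)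
    (h₂ : Integrable id ν₂) :
    ENNReal.ofReal |∫ a, a ∂ν₁ - ∫ a, a ∂ν₂| ≤ W1 ν₁ ν₂ := by
  refine le_iInf₂ fun γ hγ => ?_
  have hint : Integrable (fun q : ℝ × ℝ => q.1 - q.2) γ :=
    (hγ.integrable_fst h₁).sub (hγ.integrable_snd h₂)
  calc ENNReal.ofReal |∫ a, a ∂ν₁ - ∫ a, a ∂ν₂|
      ≤ ENNReal.ofReal (∫ q, ‖q.1 - q.2‖ ∂γ) :=
        ENNReal.ofReal_le_ofReal (hγ.abs_integral_id_sub_le h₁ h₂)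
    _ = ∫⁻ q, edist q.1 q.2 ∂γ := by
        simp_rw [ofReal_integral_norm_eq_lintegral_enorm hint, edist_eq_enorm_sub]

section

variable {X : Type*} [MeasurableSpace X] {μ : Measure X}

lemma ofReal_abs_integral_sub_le_W1_map {f g : X → ℝ} (hf : Integrable f μ)
    (hg : Integrable g μ) :
    ENNReal.ofReal |∫ x, (f x - g x) ∂μ| ≤ W1 (μ.map f) (μ.map g) := by
  have key := ofReal_abs_integral_id_sub_le_W1
    ((integrable_map_measure aestronglyMeasurable_id hf.aemeasurable).mpr hf)
    ((integrable_map_measure aestronglyMeasurable_id hg.aemeasurable).mpr hg)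
  rwa [integral_map hf.aemeasurable measurable_id'.aestronglyMeasurable,
    integral_map hg.aemeasurable measurable_id'.aestronglyMeasurable,
    ← integral_sub hf hg] at key

lemma eLpNorm_one_sub_le_mul_W1_map {f g : X → ℝ} (hf : Integrable f μ) (hg : Integrable g μ)
    {C : ℝ} (h : ∫ x, |f x - g x| ∂μ ≤ C * |∫ x, (f x - g x) ∂μ|) :
    eLpNorm (f - g) 1 μ ≤ ENNReal.ofReal C * W1 (μ.map f) (μ.map g) :=
  calc eLpNorm (f - g) 1 μ = ENNReal.ofReal (∫ x, |f x - g x| ∂μ) := by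
        rw [eLpNorm_one_eq_lintegral_enorm, ← ofReal_integral_norm_eq_lintegral_enorm (hf.sub hg)]
        rfl
    _ ≤ ENNReal.ofReal C * ENNReal.ofReal |∫ x, (f x - g x) ∂μ| := by
        rw [← ENNReal.ofReal_mul' (abs_nonneg _)]
        exact ENNReal.ofReal_le_ofReal h
    _ ≤ ENNReal.ofReal C * W1 (μ.map f) (μ.map g) := by
        gcongr
        exact ofReal_abs_integral_sub_le_W1_map hf hg

lemma abs_integral_sub_comm (f g : X → ℝ) :
    |∫ x, (f x - g x) ∂μ| = |∫ x, (g x - f x) ∂μ| := by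
  rw [← abs_neg, ← integral_neg]
  simp_rw [neg_sub]

lemma integral_abs_le_mul_abs_integral {g : X → ℝ} (hg : Integrable g μ) {E : Set X}
    (hE : MeasurableSet E) {Ct Ch K : ℝ} (hCt1 : Ct < 1) (hCh0 : 0 ≤ Ch) (hK : 0 ≤ K)
    (hsigned : |∫ x in Eᶜ, g x ∂μ| ≤ Ct * |∫ x in E, g x ∂μ|)
    (habs : ∫ x in Eᶜ, |g x| ∂μ ≤ Ch * ∫ x in E, |g x| ∂μ)
    (hnc : ∫ x in E, |g x| ∂μ ≤ K * |∫ x in E, g x ∂μ|) :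
    ∫ x, |g x| ∂μ ≤ (1 + Ch) * K / (1 - Ct) * |∫ x, g x ∂μ| := by
  rw [← integral_add_compl hE hg, ← integral_add_compl hE hg.abs]
  set a := ∫ x in E, g x ∂μ
  set b := ∫ x in Eᶜ, g x ∂μ
  set A := ∫ x in E, |g x| ∂μ
  set B := ∫ x in Eᶜ, |g x| ∂μ
  have hA : 0 ≤ A := integral_nonneg fun _ => abs_nonneg _
  have hAB : A + B ≤ (1 + Ch) * (K * |a|) :=
    calc A + B ≤ (1 + Ch) * A := by linarith
      _ ≤ (1 + Ch) * (K * |a|) := mul_le_mul_of_nonneg_left hnc (by linarith)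
  have ha : (1 - Ct) * |a| ≤ |a + b| := by
    have h : |a| ≤ |a + b| + |b| := by simpa using abs_sub (a + b) b
    linarith
  rw [div_mul_eq_mul_div, le_div_iff₀ (sub_pos.2 hCt1)]
  calc (A + B) * (1 - Ct) ≤ (1 + Ch) * (K * |a|) * (1 - Ct) :=
        mul_le_mul_of_nonneg_right hAB (sub_nonneg.2 hCt1.le)
    _ = (1 + Ch) * K * ((1 - Ct) * |a|) := by ring
    _ ≤ (1 + Ch) * K * |a + b| := mul_le_mul_of_nonneg_left ha (mul_nonneg (by linarith) hK)

end

theorem tendsto_in_probability_of_w1_tendsto_zero_general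
    {𝒳 : Type*} [MeasurableSpace 𝒳] (μ : Measure 𝒳)
    (E : Set 𝒳) (hE : MeasurableSet E)
    (y : 𝒳 → ℝ) (Y : ℕ → 𝒳 → ℝ)
    (hiy : Integrable y μ) (hiY : ∀ n, Integrable (Y n) μ)
    (Ct Ch K : ℝ) (hCt1 : Ct < 1) (hCh0 : 0 ≤ Ch)
    (hK : 1 ≤ K)
    (hsigned : ∀ n, |∫ x in Eᶜ, (y x - Y n x) ∂μ| ≤ Ct * |∫ x in E, (y x - Y n x) ∂μ|)
    (habs : ∀ n, ∫ x in Eᶜ, |y x - Y n x| ∂μ ≤ Ch * ∫ x in E, |y x - Y n x| ∂μ)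
    (hnc : ∀ n, ∫ x in E, |Y n x - y x| ∂μ ≤ K * |∫ x in E, (Y n x - y x) ∂μ|)
    (hW : Tendsto (fun n => W1 (μ.map (Y n)) (μ.map y)) atTop (nhds 0)) :
    ∀ t : ℝ, 0 < t →
      Tendsto (fun n => μ {x | t ≤ |Y n x - y x|}) atTop (nhds 0) := by
  have hbound : ∀ n, eLpNorm (Y n - y) 1 μ ≤
      ENNReal.ofReal ((1 + Ch) * K / (1 - Ct)) * W1 (μ.map (Y n)) (μ.map y) := fun n => by
    refine eLpNorm_one_sub_le_mul_W1_map (hiY n) hiy <|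
      integral_abs_le_mul_abs_integral (g := fun x => Y n x - y x) ((hiY n).sub hiy) hE hCt1 hCh0
        (by linarith) ?_ ?_ (hnc n)
    · rw [abs_integral_sub_comm, abs_integral_sub_comm (μ := μ.restrict E)]
      exact hsigned n
    · simp_rw [abs_sub_comm (Y n _)]
      exact habs n
  have hL1 : Tendsto (fun n => eLpNorm (Y n - y) 1 μ) atTop (𝓝 0) := by
    have hupper := ENNReal.Tendsto.const_mul hW
      (Or.inr (ENNReal.ofReal_ne_top (r := (1 + Ch) * K / (1 - Ct))))
    rw [mul_zero] at hupper
    exact tendsto_of_tendsto_of_tendsto_of_le_of_le tendsto_const_nhds hupper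
      (fun _ => zero_le) hbound
  have hconv : TendstoInMeasure μ Y atTop y := tendstoInMeasure_of_tendsto_eLpNorm one_ne_zero
    (fun n => (hiY n).aestronglyMeasurable) hiy.aestronglyMeasurable hL1
  exact tendstoInMeasure_iff_norm.mp hconv

/-- If a sequence of uniformly data-consistent estimators converges to the truth in
1-Wasserstein distance of the push-forwards, then it converges in probability. -/
theorem tendsto_in_probability_of_w1_tendsto_zero
    {𝒳 : Type*} [MeasurableSpace 𝒳] (μ : Measure 𝒳) [IsProbabilityMeasure μ]
    (E : Set 𝒳) (hE : MeasurableSet E)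
    (y : 𝒳 → ℝ) (Y : ℕ → 𝒳 → ℝ)
    (hy : Measurable y) (hY : ∀ n, Measurable (Y n))
    (hiy : Integrable y μ) (hiY : ∀ n, Integrable (Y n) μ)
    (Ct Ch K : ℝ) (hCt0 : 0 ≤ Ct) (hCt1 : Ct < 1) (hCh0 : 0 ≤ Ch) (hCh1 : Ch < 1)
    (hK : 1 ≤ K)
    (hsigned : ∀ n, |∫ x in Eᶜ, (y x - Y n x) ∂μ| ≤ Ct * |∫ x in E, (y x - Y n x) ∂μ|)
    (habs : ∀ n, ∫ x in Eᶜ, |y x - Y n x| ∂μ ≤ Ch * ∫ x in E, |y x - Y n x| ∂μ)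
    (hnc : ∀ n, ∫ x in E, |Y n x - y x| ∂μ ≤ K * |∫ x in E, (Y n x - y x) ∂μ|)
    (hW : Tendsto (fun n => W1 (μ.map (Y n)) (μ.map y)) atTop (nhds 0)) :
    ∀ t : ℝ, 0 < t →
      Tendsto (fun n => μ {x | t ≤ |Y n x - y x|}) atTop (nhds 0) :=
  tendsto_in_probability_of_w1_tendsto_zero_general μ E hE y Y hiy hiY Ct Ch K hCt1 hCh0 hK hsigned
    habs hnc hW
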